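/- arXiv:1005.5661 — 2 statements merged into one kernel-verified Lean document; each statement's English description precedes it below -/
import Mathlib

section
/- Let X be a metrizable compact Hausdorff space containing more than one point, and let d be any metric on OH(OH(X)) inducing its topology. Then μ_OH X satisfies the disjoint approximation condition: for every ε > 0 there exist continuous maps g₁, g₂ : OH(OH(X)) → OH(OH(X)) such that g₁(OH(OH(X))) ∩ g₂(OH(OH(X))) = ∅, d(g_i(Λ), Λ) < ε for every Λ ∈ OH(OH(X)) and i = 1,2, and μ_OH X ∘ g_i = μ_OH X for i = 1,2. -/
/-- The set of normed, weakly additive, order-preserving, positively homogeneous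
functionals on `C(X, ℝ)`. -/
def OHF (X : Type*) [TopologicalSpace X] : Set (C(X, ℝ) → ℝ) :=
  {ν | ν 1 = 1 ∧ (∀ (φ : C(X, ℝ)) (c : ℝ), ν (φ + ContinuousMap.const X c) = ν φ + c) ∧
    (∀ φ ψ : C(X, ℝ), φ ≤ ψ → ν φ ≤ ν ψ) ∧
    ∀ (φ : C(X, ℝ)) (t : ℝ), 0 ≤ t → ν (t • φ) = t * ν φ}

/-- For `φ ∈ C(X, ℝ)`, the evaluation map `π_φ : OH(X) → ℝ`. -/
def piOH (X : Type*) [TopologicalSpace X] (φ : C(X, ℝ)) : C(↥(OHF X), ℝ) :=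
  ⟨fun ν => ν.1 φ, (continuous_apply φ).comp continuous_subtype_val⟩

/-- The monad multiplication `μ_OH X : OH(OH(X)) → OH(X)`, `μ_OH X (M) (φ) = M (π_φ)`. -/
def muOH (X : Type*) [TopologicalSpace X] (M : ↥(OHF (↥(OHF X)))) : ↥(OHF X) := by
  refine ⟨fun φ => M.1 (piOH X φ), ?_, ?_, ?_, ?_⟩
  · have h1 : piOH X (1 : C(X, ℝ)) = 1 := by
      ext ν; exact ν.2.1
    show M.1 (piOH X 1) = 1
    rw [h1]; exact M.2.1
  · intro φ c
    have h : piOH X (φ + ContinuousMap.const X c)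
        = piOH X φ + ContinuousMap.const _ c := by
      ext ν; exact ν.2.2.1 φ c
    show M.1 (piOH X (φ + ContinuousMap.const X c)) = M.1 (piOH X φ) + c
    rw [h]; exact M.2.2.1 _ c
  · intro φ ψ h
    exact M.2.2.2.1 _ _ (fun ν => ν.2.2.2.1 φ ψ h)
  · intro φ t ht
    have h : piOH X (t • φ) = t • piOH X φ := by
      ext ν; exact ν.2.2.2.2 φ t ht
    show M.1 (piOH X (t • φ)) = t * M.1 (piOH X φ)
    rw [h]; exact M.2.2.2.2 _ t ht

/-!
Write `Y = OH(X)`. Since `OH(Y)` is compact, the given metric on it is controlled by finitely many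
coordinates `Φ ∈ C(Y)`, each up to some `δ_Φ > 0`. As a convex set with two points, `Y` has no
isolated points, so there are disjoint finite sets `C ∋ min` and `D ∋ max` in `Y` (where
`min φ = ⨅ x, φ x` and `max φ = ⨆ x, φ x`) such that `C` contains a `δ_Φ`-near-minimum point and
`D` a `δ_Φ`-near-maximum point of each of these `Φ`. Then `g₁ M = M ⊔ min_C` and
`g₂ M = M ⊓ max_D` move every controlling coordinate by less than `δ_Φ`; their ranges are
separated by an Urysohn function equal to `1` on `C` and `0` on `D`; and they do not change
`μ_OH X M`, because `min_C π_φ ≤ π_φ min = ⨅ x, φ x ≤ M π_φ`.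
-/

open Set Filter Topology Uniformity

namespace OHF

variable {Z : Type*} [TopologicalSpace Z] {ν ν₁ ν₂ : C(Z, ℝ) → ℝ}

theorem map_const (hν : ν ∈ OHF Z) (c : ℝ) : ν (ContinuousMap.const Z c) = c := by
  have h0 : ν 0 = 0 := by simpa using hν.2.2.2 0 0 le_rfl
  simpa [h0] using hν.2.1 0 c

theorem le_apply_of_forall_le (hν : ν ∈ OHF Z) {c : ℝ} {φ : C(Z, ℝ)} (h : ∀ z, c ≤ φ z) :
    c ≤ ν φ :=
  map_const hν c ▸ hν.2.2.1 _ _ h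

theorem apply_le_of_forall_le (hν : ν ∈ OHF Z) {c : ℝ} {φ : C(Z, ℝ)} (h : ∀ z, φ z ≤ c) :
    ν φ ≤ c :=
  map_const hν c ▸ hν.2.2.1 _ _ h

theorem sup_mem (h₁ : ν₁ ∈ OHF Z) (h₂ : ν₂ ∈ OHF Z) : ν₁ ⊔ ν₂ ∈ OHF Z := by
  refine ⟨?_, fun φ c => ?_, fun φ ψ h => ?_, fun φ t ht => ?_⟩
  · simp [h₁.1, h₂.1]
  · simp [h₁.2.1 φ c, h₂.2.1 φ c, max_add_add_right]
  · exact sup_le_sup (h₁.2.2.1 φ ψ h) (h₂.2.2.1 φ ψ h)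
  · simp [h₁.2.2.2 φ t ht, h₂.2.2.2 φ t ht, mul_max_of_nonneg _ _ ht]

theorem inf_mem (h₁ : ν₁ ∈ OHF Z) (h₂ : ν₂ ∈ OHF Z) : ν₁ ⊓ ν₂ ∈ OHF Z := by
  refine ⟨?_, fun φ c => ?_, fun φ ψ h => ?_, fun φ t ht => ?_⟩
  · simp [h₁.1, h₂.1]
  · simp [h₁.2.1 φ c, h₂.2.1 φ c, min_add_add_right]
  · exact inf_le_inf (h₁.2.2.1 φ ψ h) (h₂.2.2.1 φ ψ h)
  · simp [h₁.2.2.2 φ t ht, h₂.2.2.2 φ t ht, mul_min_of_nonneg _ _ ht]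

theorem eval_mem (z : Z) : (fun φ : C(Z, ℝ) => φ z) ∈ OHF Z :=
  ⟨rfl, fun _ _ => rfl, fun _ _ h => h z, fun _ _ _ => rfl⟩

theorem finset_inf'_mem (s : Finset Z) (hs : s.Nonempty) :
    (fun φ : C(Z, ℝ) => s.inf' hs φ) ∈ OHF Z := by
  have h : (fun φ : C(Z, ℝ) => s.inf' hs φ) = s.inf' hs fun z φ => φ z := by
    ext φ; simp
  exact h ▸ Finset.inf'_induction hs _ (fun _ h₁ _ h₂ => inf_mem h₁ h₂) fun z _ => eval_mem z

theorem finset_sup'_mem (s : Finset Z) (hs : s.Nonempty) :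
    (fun φ : C(Z, ℝ) => s.sup' hs φ) ∈ OHF Z := by
  have h : (fun φ : C(Z, ℝ) => s.sup' hs φ) = s.sup' hs fun z φ => φ z := by
    ext φ; simp
  exact h ▸ Finset.sup'_induction hs _ (fun _ h₁ _ h₂ => sup_mem h₁ h₂) fun z _ => eval_mem z

variable [CompactSpace Z]

theorem iInf_le_apply (hν : ν ∈ OHF Z) (φ : C(Z, ℝ)) : ⨅ z, φ z ≤ ν φ :=
  le_apply_of_forall_le hν fun z => ciInf_le (isCompact_range φ.continuous).bddBelow z

theorem apply_le_iSup (hν : ν ∈ OHF Z) (φ : C(Z, ℝ)) : ν φ ≤ ⨆ z, φ z :=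
  apply_le_of_forall_le hν fun z => le_ciSup (isCompact_range φ.continuous).bddAbove z

variable [Nonempty Z]

theorem iInf_mem : (fun φ : C(Z, ℝ) => ⨅ z, φ z) ∈ OHF Z := by
  refine ⟨ciInf_const, fun φ c => ?_, fun φ ψ h => ?_, fun φ t ht => ?_⟩
  · exact ((OrderIso.addRight c).map_ciInf (isCompact_range φ.continuous).bddBelow).symm
  · exact ciInf_mono (isCompact_range φ.continuous).bddBelow h
  · exact (Real.mul_iInf_of_nonneg ht _).symm

theorem iSup_mem : (fun φ : C(Z, ℝ) => ⨆ z, φ z) ∈ OHF Z := by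
  refine ⟨ciSup_const, fun φ c => ?_, fun φ ψ h => ?_, fun φ t ht => ?_⟩
  · exact ((OrderIso.addRight c).map_ciSup (isCompact_range φ.continuous).bddAbove).symm
  · exact ciSup_mono (isCompact_range ψ.continuous).bddAbove h
  · exact (Real.mul_iSup_of_nonneg ht _).symm

end OHF

section Topology

variable (Z : Type*) [TopologicalSpace Z]

theorem isClosed_OHF : IsClosed (OHF Z) := by
  simp only [OHF, ofPred_and, ofPred_forall]
  refine .inter (isClosed_eq (continuous_apply _) continuous_const) (.inter ?_ (.inter ?_ ?_))
  · exact isClosed_iInter fun φ => isClosed_iInter fun c =>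
      isClosed_eq (continuous_apply _) ((continuous_apply φ).add continuous_const)
  · exact isClosed_iInter fun φ => isClosed_iInter fun ψ => isClosed_iInter fun _ =>
      isClosed_le (continuous_apply _) (continuous_apply _)
  · exact isClosed_iInter fun φ => isClosed_iInter fun t => isClosed_iInter fun _ =>
      isClosed_eq (continuous_apply _) (continuous_const.mul (continuous_apply _))

theorem isCompact_OHF [CompactSpace Z] : IsCompact (OHF Z) :=
  (isCompact_univ_pi fun φ : C(Z, ℝ) => isCompact_Icc (a := ⨅ z, φ z) (b := ⨆ z, φ z))
    |>.of_isClosed_subset (isClosed_OHF Z) fun _ hν => mem_univ_pi.2 fun φ =>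
      ⟨OHF.iInf_le_apply hν φ, OHF.apply_le_iSup hν φ⟩

instance [CompactSpace Z] : CompactSpace (OHF Z) :=
  isCompact_iff_compactSpace.1 (isCompact_OHF Z)

theorem convex_OHF : Convex ℝ (OHF Z) := by
  intro ν₁ h₁ ν₂ h₂ a b ha hb hab
  refine ⟨?_, fun φ c => ?_, fun φ ψ h => ?_, fun φ t ht => ?_⟩
  · simp [h₁.1, h₂.1, hab]
  · simp only [Pi.add_apply, Pi.smul_apply, smul_eq_mul, h₁.2.1 φ c, h₂.2.1 φ c]
    linear_combination c * hab
  · simp only [Pi.add_apply, Pi.smul_apply, smul_eq_mul]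
    gcongr
    exacts [h₁.2.2.1 φ ψ h, h₂.2.2.1 φ ψ h]
  · simp only [Pi.add_apply, Pi.smul_apply, smul_eq_mul, h₁.2.2.2 φ t ht, h₂.2.2.2 φ t ht]
    ring

end Topology

section Extremal

variable (X : Type*) [TopologicalSpace X] [CompactSpace X] [Nonempty X]

noncomputable def minOH : OHF X := ⟨fun φ => ⨅ x, φ x, OHF.iInf_mem⟩

noncomputable def maxOH : OHF X := ⟨fun φ => ⨆ x, φ x, OHF.iSup_mem⟩

-- With `Nontrivial (OHF X)` below, Mathlib turns this into `(𝓝[≠] ν).NeBot` for every `ν`.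
instance : ConnectedSpace (OHF X) :=
  isConnected_iff_connectedSpace.1 ⟨⟨minOH X, (minOH X).2⟩, (convex_OHF X).isPreconnected⟩

theorem minOH_ne_maxOH [T2Space X] [Nontrivial X] : minOH X ≠ maxOH X := by
  obtain ⟨x₁, x₂, hx⟩ := exists_pair_ne X
  obtain ⟨φ, hφ₁, hφ₂, -⟩ := exists_continuous_zero_one_of_isClosed isClosed_singleton
    isClosed_singleton (disjoint_singleton.2 hx)
  intro h
  have hφ : ⨅ x, φ x = ⨆ x, φ x := congrFun (congrArg Subtype.val h) φ
  have hbdd := isCompact_range φ.continuous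
  have h₁ : ⨅ x, φ x ≤ 0 := (ciInf_le hbdd.bddBelow x₁).trans (hφ₁ rfl).le
  have h₂ : 1 ≤ ⨆ x, φ x := (hφ₂ rfl).ge.trans (le_ciSup hbdd.bddAbove x₂)
  linarith

instance [T2Space X] [Nontrivial X] : Nontrivial (OHF X) :=
  nontrivial_of_ne _ _ (minOH_ne_maxOH X)

end Extremal

theorem exists_finset_forall_dist_lt_imp_dist_lt {ι β : Type*} [PseudoMetricSpace β]
    {S : Set (ι → β)} [CompactSpace S] (m : MetricSpace S)
    (hm : m.toUniformSpace.toTopologicalSpace = (inferInstance : TopologicalSpace S))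
    {ε : ℝ} (hε : 0 < ε) :
    ∃ (I : Finset ι) (δ : ι → ℝ), (∀ i ∈ I, 0 < δ i) ∧
      ∀ a b : S, (∀ i ∈ I, dist (a.1 i) (b.1 i) < δ i) → m.dist a b < ε := by
  have hball : {p : S × S | m.dist p.1 p.2 < ε} ∈ 𝓤 S :=
    unique_uniformity_of_compact hm rfl ▸
      @Metric.dist_mem_uniformity _ m.toPseudoMetricSpace ε hε
  rw [uniformity_setCoe, Pi.uniformity] at hball
  obtain ⟨⟨I, δ⟩, ⟨hI, hδ⟩, hsub⟩ :=
    ((HasBasis.iInf' fun i => Metric.uniformity_basis_dist.comap _).comap _).mem_iff.1 hball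
  refine ⟨hI.toFinset, δ, fun i hi => hδ i (hI.mem_toFinset.1 hi), fun a b hab => ?_⟩
  exact @hsub (a, b) (mem_iInter₂.2 fun i hi => hab i (hI.mem_toFinset.2 hi))

section NoIsolatedPoints

variable {Y : Type*} [TopologicalSpace Y] [T1Space Y] [∀ y : Y, (𝓝[≠] y).NeBot]

theorem IsOpen.exists_mem_notMem_of_finite {U A : Set Y} (hU : IsOpen U) (hne : U.Nonempty)
    (hA : A.Finite) : ∃ y ∈ U, y ∉ A :=
  let ⟨x, hx⟩ := hne
  ((infinite_of_mem_nhds x (hU.mem_nhds hx)).sdiff hA).nonempty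

theorem exists_disjoint_finsets_near_extrema (F : Finset C(Y, ℝ)) {δ : C(Y, ℝ) → ℝ}
    (hδ : ∀ Φ ∈ F, 0 < δ Φ) {a b : Y} (hab : a ≠ b) :
    ∃ C D : Finset Y, a ∈ C ∧ b ∈ D ∧ Disjoint C D ∧
      (∀ Φ ∈ F, ∃ y ∈ C, Φ y < (⨅ z, Φ z) + δ Φ) ∧
      (∀ Φ ∈ F, ∃ y ∈ D, (⨆ z, Φ z) - δ Φ < Φ y) := by
  classical
  have : Nonempty Y := ⟨a⟩
  choose! q hq hqa using fun Φ (hΦ : Φ ∈ F) =>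
    (isOpen_lt continuous_const Φ.continuous).exists_mem_notMem_of_finite
      (exists_lt_of_lt_ciSup (sub_lt_self _ (hδ Φ hΦ))) (finite_singleton a)
  choose! p hp hpD using fun Φ (hΦ : Φ ∈ F) =>
    (isOpen_lt Φ.continuous continuous_const).exists_mem_notMem_of_finite
      (exists_lt_of_ciInf_lt (lt_add_of_pos_right _ (hδ Φ hΦ)))
      (insert b (F.image q)).finite_toSet
  refine ⟨insert a (F.image p), insert b (F.image q), Finset.mem_insert_self _ _,
    Finset.mem_insert_self _ _, Finset.disjoint_left.2 fun y hyC hyD => ?_,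
    fun Φ hΦ => ⟨p Φ, Finset.mem_insert_of_mem (Finset.mem_image_of_mem p hΦ), hp Φ hΦ⟩,
    fun Φ hΦ => ⟨q Φ, Finset.mem_insert_of_mem (Finset.mem_image_of_mem q hΦ), hq Φ hΦ⟩⟩
  rw [Finset.mem_insert, Finset.mem_image] at hyC
  obtain rfl | ⟨Φ, hΦ, rfl⟩ := hyC
  · rw [Finset.mem_insert, Finset.mem_image] at hyD
    obtain rfl | ⟨Ψ, hΨ, hΨa⟩ := hyD
    exacts [hab rfl, hqa Ψ hΨ hΨa]
  · exact hpD Φ hΦ hyD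

end NoIsolatedPoints

section Perturbation

variable {Y : Type*} [TopologicalSpace Y]

def supMinOn (C : Finset Y) (hC : C.Nonempty) (M : OHF Y) : OHF Y :=
  ⟨M.1 ⊔ fun Φ => C.inf' hC Φ, OHF.sup_mem M.2 (OHF.finset_inf'_mem C hC)⟩

def infMaxOn (D : Finset Y) (hD : D.Nonempty) (M : OHF Y) : OHF Y :=
  ⟨M.1 ⊓ fun Φ => D.sup' hD Φ, OHF.inf_mem M.2 (OHF.finset_sup'_mem D hD)⟩

variable {C D : Finset Y} (hC : C.Nonempty) (hD : D.Nonempty)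

theorem continuous_supMinOn : Continuous (supMinOn C hC) :=
  (continuous_pi fun Φ =>
    ((continuous_apply Φ).comp continuous_subtype_val).max continuous_const).subtype_mk _

theorem continuous_infMaxOn : Continuous (infMaxOn D hD) :=
  (continuous_pi fun Φ =>
    ((continuous_apply Φ).comp continuous_subtype_val).min continuous_const).subtype_mk _

theorem disjoint_range_supMinOn_infMaxOn [T1Space Y] [NormalSpace Y] (hCD : Disjoint C D) :
    Disjoint (range (supMinOn C hC)) (range (infMaxOn D hD)) := by
  obtain ⟨Φ, hΦD, hΦC, -⟩ := exists_continuous_zero_one_of_isClosed D.finite_toSet.isClosed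
    C.finite_toSet.isClosed (Finset.disjoint_coe.2 hCD.symm)
  have h₁ : ∀ M, 1 ≤ (supMinOn C hC M).1 Φ := fun M =>
    le_sup_of_le_right (Finset.le_inf' _ _ fun y hy => (hΦC hy).ge)
  have h₂ : ∀ M, (infMaxOn D hD M).1 Φ ≤ 0 := fun M =>
    inf_le_of_right_le (Finset.sup'_le _ _ fun y hy => (hΦD hy).le)
  rw [Set.disjoint_left]
  rintro _ ⟨M₁, rfl⟩ ⟨M₂, h⟩
  linarith [h₁ M₁, h₂ M₂, congrFun (congrArg Subtype.val h) Φ]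

variable [CompactSpace Y] (M : OHF Y) {Φ : C(Y, ℝ)} {δ : ℝ}

theorem abs_supMinOn_apply_sub_lt (h : ∃ y ∈ C, Φ y < (⨅ z, Φ z) + δ) :
    |(supMinOn C hC M).1 Φ - M.1 Φ| < δ := by
  obtain ⟨y, hyC, hy⟩ := h
  have hδ : 0 < δ := by linarith [ciInf_le (isCompact_range Φ.continuous).bddBelow y]
  change |M.1 Φ ⊔ C.inf' hC Φ - M.1 Φ| < δ
  rw [abs_of_nonneg (sub_nonneg.2 le_sup_left), sub_lt_iff_lt_add']
  refine max_lt (lt_add_of_pos_right _ hδ) ?_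
  calc C.inf' hC Φ ≤ Φ y := C.inf'_le _ hyC
    _ < (⨅ z, Φ z) + δ := hy
    _ ≤ M.1 Φ + δ := by gcongr; exact OHF.iInf_le_apply M.2 Φ

theorem abs_infMaxOn_apply_sub_lt (h : ∃ y ∈ D, (⨆ z, Φ z) - δ < Φ y) :
    |(infMaxOn D hD M).1 Φ - M.1 Φ| < δ := by
  obtain ⟨y, hyD, hy⟩ := h
  have hδ : 0 < δ := by linarith [le_ciSup (isCompact_range Φ.continuous).bddAbove y]
  change |M.1 Φ ⊓ D.sup' hD Φ - M.1 Φ| < δ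
  rw [abs_sub_comm, abs_of_nonneg (sub_nonneg.2 inf_le_left), sub_lt_comm]
  refine lt_min (sub_lt_self _ hδ) ?_
  calc M.1 Φ - δ ≤ (⨆ z, Φ z) - δ := by gcongr; exact OHF.apply_le_iSup M.2 Φ
    _ < Φ y := hy
    _ ≤ D.sup' hD Φ := D.le_sup' _ hyD

end Perturbation

section Multiplication

variable (X : Type*) [TopologicalSpace X] [CompactSpace X] [Nonempty X]

theorem muOH_comp_supMinOn {C : Finset (OHF X)} (hC : C.Nonempty) (hmin : minOH X ∈ C) :
    muOH X ∘ supMinOn C hC = muOH X := by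
  funext M
  refine Subtype.ext (funext fun φ => sup_eq_left.2 ?_)
  exact (C.inf'_le _ hmin).trans (OHF.iInf_le_apply (muOH X M).2 φ)

theorem muOH_comp_infMaxOn {D : Finset (OHF X)} (hD : D.Nonempty) (hmax : maxOH X ∈ D) :
    muOH X ∘ infMaxOn D hD = muOH X := by
  funext M
  refine Subtype.ext (funext fun φ => inf_eq_left.2 ?_)
  exact (OHF.apply_le_iSup (muOH X M).2 φ).trans (D.le_sup' (f := piOH X φ) hmax)

end Multiplication

theorem muOH_disjoint_approximation_general (X : Type*) [TopologicalSpace X] [CompactSpace X]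
    [T2Space X] [Nontrivial X]
    (m : MetricSpace ↥(OHF (↥(OHF X))))
    (hm : m.toUniformSpace.toTopologicalSpace
      = (inferInstance : TopologicalSpace ↥(OHF (↥(OHF X))))) :
    ∀ ε : ℝ, 0 < ε → ∃ g₁ g₂ : ↥(OHF (↥(OHF X))) → ↥(OHF (↥(OHF X))),
      Continuous g₁ ∧ Continuous g₂ ∧
      Set.range g₁ ∩ Set.range g₂ = ∅ ∧
      (∀ Λ : ↥(OHF (↥(OHF X))), m.dist (g₁ Λ) Λ < ε ∧ m.dist (g₂ Λ) Λ < ε) ∧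
      muOH X ∘ g₁ = muOH X ∧ muOH X ∘ g₂ = muOH X := by
  intro ε hε
  obtain ⟨F, δ, hδ, hF⟩ := exists_finset_forall_dist_lt_imp_dist_lt m hm hε
  obtain ⟨C, D, hminC, hmaxD, hCD, hCF, hDF⟩ :=
    exists_disjoint_finsets_near_extrema F hδ (minOH_ne_maxOH X)
  have hC : C.Nonempty := ⟨_, hminC⟩
  have hD : D.Nonempty := ⟨_, hmaxD⟩
  refine ⟨supMinOn C hC, infMaxOn D hD, continuous_supMinOn hC, continuous_infMaxOn hD,
    (disjoint_range_supMinOn_infMaxOn hC hD hCD).inter_eq, fun Λ => ⟨?_, ?_⟩,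
    muOH_comp_supMinOn X hC hminC, muOH_comp_infMaxOn X hD hmaxD⟩
  · exact hF _ _ fun Φ hΦ =>
      (Real.dist_eq _ _).trans_lt (abs_supMinOn_apply_sub_lt hC Λ (hCF Φ hΦ))
  · exact hF _ _ fun Φ hΦ =>
      (Real.dist_eq _ _).trans_lt (abs_infMaxOn_apply_sub_lt hD Λ (hDF Φ hΦ))

/-- For a metrizable compact Hausdorff space `X` with more than one point, and any metric
on `OH(OH(X))` inducing its topology, the map `μ_OH X` satisfies the disjoint approximation
condition. -/
theorem muOH_disjoint_approximation (X : Type*) [TopologicalSpace X] [CompactSpace X]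
    [T2Space X] [TopologicalSpace.MetrizableSpace X] [Nontrivial X]
    (m : MetricSpace ↥(OHF (↥(OHF X))))
    (hm : m.toUniformSpace.toTopologicalSpace
      = (inferInstance : TopologicalSpace ↥(OHF (↥(OHF X))))) :
    ∀ ε : ℝ, 0 < ε → ∃ g₁ g₂ : ↥(OHF (↥(OHF X))) → ↥(OHF (↥(OHF X))),
      Continuous g₁ ∧ Continuous g₂ ∧
      Set.range g₁ ∩ Set.range g₂ = ∅ ∧
      (∀ Λ : ↥(OHF (↥(OHF X))), m.dist (g₁ Λ) Λ < ε ∧ m.dist (g₂ Λ) Λ < ε) ∧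
      muOH X ∘ g₁ = muOH X ∧ muOH X ∘ g₂ = muOH X :=
  muOH_disjoint_approximation_general X m hm
end

section
/- Let f : X → Y be an open continuous surjection between compact Hausdorff spaces. Then the map OH(f) : OH(X) → OH(Y) has a one-point (degenerate) fiber if and only if f has a one-point fiber. -/
/-- The functorial map `OH(f) : OH(X) → OH(Y)`, `OH(f)(ν)(φ) = ν(φ ∘ f)`. -/
def OHmap {X Y : Type*} [TopologicalSpace X] [TopologicalSpace Y] (f : X → Y)
    (hf : Continuous f) (ν : ↥(OHF X)) : ↥(OHF Y) := by
  refine ⟨fun φ => ν.1 (φ.comp ⟨f, hf⟩), ?_, ?_, ?_, ?_⟩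
  · show ν.1 ((1 : C(Y, ℝ)).comp ⟨f, hf⟩) = 1
    have h1 : (1 : C(Y, ℝ)).comp ⟨f, hf⟩ = 1 := rfl
    rw [h1]; exact ν.2.1
  · intro φ c
    show ν.1 ((φ + ContinuousMap.const Y c).comp ⟨f, hf⟩) = ν.1 (φ.comp ⟨f, hf⟩) + c
    have h : (φ + ContinuousMap.const Y c).comp ⟨f, hf⟩
        = φ.comp ⟨f, hf⟩ + ContinuousMap.const X c := rfl
    rw [h]; exact ν.2.2.1 _ c
  · intro φ ψ h
    exact ν.2.2.2.1 _ _ (fun x => h (f x))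
  · intro φ t ht
    show ν.1 ((t • φ).comp ⟨f, hf⟩) = t * ν.1 (φ.comp ⟨f, hf⟩)
    have h : (t • φ).comp ⟨f, hf⟩ = t • (φ.comp ⟨f, hf⟩) := rfl
    rw [h]; exact ν.2.2.2.2 _ t ht


section OHAux

open Set

variable {X Y : Type*} [TopologicalSpace X] [CompactSpace X] [T2Space X]
  [TopologicalSpace Y] [T2Space Y] {f : X → Y}

private lemma img_nonempty (hs : Function.Surjective f) (φ : C(X, ℝ)) (y : Y) :
    (φ '' (f ⁻¹' {y})).Nonempty := by
  obtain ⟨x, hx⟩ := hs y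
  exact ⟨φ x, x, hx, rfl⟩

private lemma img_compact (hc : Continuous f) (φ : C(X, ℝ)) (y : Y) :
    IsCompact (φ '' (f ⁻¹' {y})) :=
  ((isClosed_singleton.preimage hc).isCompact).image φ.continuous

private lemma sSup_mem_img (hc : Continuous f) (hs : Function.Surjective f) (φ : C(X, ℝ))
    (y : Y) : sSup (φ '' (f ⁻¹' {y})) ∈ φ '' (f ⁻¹' {y}) :=
  (img_compact hc φ y).sSup_mem (img_nonempty hs φ y)

private lemma cont_gsup (hc : Continuous f) (ho : IsOpenMap f) (hs : Function.Surjective f)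
    (φ : C(X, ℝ)) : Continuous fun y => sSup (φ '' (f ⁻¹' {y})) := by
  rw [continuous_iff_continuousAt]
  intro y
  rw [ContinuousAt, tendsto_order]
  constructor
  · intro a ha
    obtain ⟨r, ⟨x, hx, rfl⟩, har⟩ : ∃ r ∈ φ '' (f ⁻¹' {y}), a < r := by
      exact ⟨_, sSup_mem_img hc hs φ y, ha⟩
    have hU : IsOpen (f '' {x | a < φ x}) := ho _ (isOpen_lt continuous_const φ.continuous)
    filter_upwards [hU.mem_nhds ⟨x, har, hx⟩] with y' hy'
    rcases hy' with ⟨x', hx', rfl⟩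
    exact lt_of_lt_of_le hx'
      (le_csSup (img_compact hc φ _).bddAbove (mem_image_of_mem φ rfl))
  · intro a ha
    have hC : IsClosed (f '' {x | a ≤ φ x}) :=
      (((isClosed_le continuous_const φ.continuous).isCompact).image hc).isClosed
    have hy : y ∉ f '' {x | a ≤ φ x} := by
      rintro ⟨x, hx, rfl⟩
      exact absurd (le_trans hx
        (le_csSup (img_compact hc φ _).bddAbove (mem_image_of_mem φ rfl))) (not_le.2 ha)
    filter_upwards [hC.isOpen_compl.mem_nhds hy] with y' hy'
    obtain ⟨x', hx', heq⟩ := sSup_mem_img hc hs φ y'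
    rw [← heq]
    by_contra hcon
    exact hy' ⟨x', le_of_not_gt hcon, hx'⟩

/-- The continuous map `y ↦ sup_{f⁻¹(y)} φ`. -/
private noncomputable def gSup (hc : Continuous f) (ho : IsOpenMap f)
    (hs : Function.Surjective f) (φ : C(X, ℝ)) : C(Y, ℝ) :=
  ⟨fun y => sSup (φ '' (f ⁻¹' {y})), cont_gsup hc ho hs φ⟩

private lemma sSup_image_mono {g : ℝ → ℝ} (hg : Monotone g) {s : Set ℝ}
    (hb : BddAbove s) (hm : sSup s ∈ s) : sSup (g '' s) = g (sSup s) := by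
  have hb' : BddAbove (g '' s) := by
    refine ⟨g (sSup s), ?_⟩
    rintro a ⟨x, hx, rfl⟩
    exact hg (le_csSup hb hx)
  apply le_antisymm
  · apply csSup_le ⟨g (sSup s), mem_image_of_mem g hm⟩
    rintro a ⟨x, hx, rfl⟩
    exact hg (le_csSup hb hx)
  · exact le_csSup hb' (mem_image_of_mem g hm)

private lemma le_gSup (hc : Continuous f) (ho : IsOpenMap f) (hs : Function.Surjective f)
    (φ : C(X, ℝ)) (x : X) : φ x ≤ gSup hc ho hs φ (f x) :=
  le_csSup (img_compact hc φ _).bddAbove (mem_image_of_mem φ rfl)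

/-- `gSup (θ∘f + φ) = θ + gSup φ`. -/
private lemma gSup_pull_add (hc : Continuous f) (ho : IsOpenMap f) (hs : Function.Surjective f)
    (θ : C(Y, ℝ)) (φ : C(X, ℝ)) :
    gSup hc ho hs (θ.comp ⟨f, hc⟩ + φ) = θ + gSup hc ho hs φ := by
  ext y
  show sSup ((θ.comp ⟨f, hc⟩ + φ : C(X, ℝ)) '' (f ⁻¹' {y})) = θ y + sSup (φ '' (f ⁻¹' {y}))
  have h1 : ((θ.comp ⟨f, hc⟩ + φ : C(X, ℝ)) : X → ℝ) '' (f ⁻¹' {y})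
      = (fun r => θ y + r) '' (φ '' (f ⁻¹' {y})) := by
    rw [image_image]
    apply image_congr
    intro x hx
    simp only [ContinuousMap.add_apply, ContinuousMap.comp_apply, ContinuousMap.coe_mk]
    rw [show f x = y from hx]
  rw [h1, sSup_image_mono (fun a b hab => by simpa using hab : Monotone fun r => θ y + r)
    (img_compact hc φ y).bddAbove (sSup_mem_img hc hs φ y)]

private lemma gSup_smul (hc : Continuous f) (ho : IsOpenMap f) (hs : Function.Surjective f)
    (φ : C(X, ℝ)) (t : ℝ) (ht : 0 ≤ t) :
    gSup hc ho hs (t • φ) = t • gSup hc ho hs φ := by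
  ext y
  show sSup ((t • φ : C(X, ℝ)) '' (f ⁻¹' {y})) = t * sSup (φ '' (f ⁻¹' {y}))
  have h1 : ((t • φ : C(X, ℝ)) : X → ℝ) '' (f ⁻¹' {y})
      = (fun r => t * r) '' (φ '' (f ⁻¹' {y})) := by
    rw [image_image]; rfl
  rw [h1, sSup_image_mono (fun a b hab => mul_le_mul_of_nonneg_left hab ht)
    (img_compact hc φ y).bddAbove (sSup_mem_img hc hs φ y)]

private lemma gSup_comp (hc : Continuous f) (ho : IsOpenMap f) (hs : Function.Surjective f)
    (ψ : C(Y, ℝ)) : gSup hc ho hs (ψ.comp ⟨f, hc⟩) = ψ := by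
  ext y
  show sSup ((ψ.comp ⟨f, hc⟩ : C(X, ℝ)) '' (f ⁻¹' {y})) = ψ y
  have h1 : ((ψ.comp ⟨f, hc⟩ : C(X, ℝ)) : X → ℝ) '' (f ⁻¹' {y}) = {ψ y} := by
    apply Subset.antisymm
    · rintro r ⟨x, hx, rfl⟩
      simp only [ContinuousMap.comp_apply, ContinuousMap.coe_mk, mem_singleton_iff]
      rw [show f x = y from hx]
    · rintro r hr
      obtain ⟨x, hx⟩ := hs y
      exact ⟨x, hx, by rw [mem_singleton_iff] at hr; simp [hr, show f x = y from hx]⟩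
  rw [h1, csSup_singleton]

private lemma gSup_mono (hc : Continuous f) (ho : IsOpenMap f) (hs : Function.Surjective f)
    {φ ψ : C(X, ℝ)} (h : φ ≤ ψ) : gSup hc ho hs φ ≤ gSup hc ho hs ψ := by
  rw [ContinuousMap.le_def]
  intro y
  apply csSup_le (img_nonempty hs φ y)
  rintro a ⟨x, hx, rfl⟩
  exact le_trans (h x) (le_gSup hc ho hs ψ x |>.trans_eq (by rw [show f x = y from hx]))

/-- The continuous map `y ↦ inf_{f⁻¹(y)} φ`, defined as `-(gSup (-φ))`. -/
private noncomputable def gInf (hc : Continuous f) (ho : IsOpenMap f)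
    (hs : Function.Surjective f) (φ : C(X, ℝ)) : C(Y, ℝ) :=
  -(gSup hc ho hs (-φ))

private lemma gInf_le (hc : Continuous f) (ho : IsOpenMap f) (hs : Function.Surjective f)
    (φ : C(X, ℝ)) (x : X) : gInf hc ho hs φ (f x) ≤ φ x := by
  have := le_gSup hc ho hs (-φ) x
  simp only [ContinuousMap.neg_apply] at this
  simp only [gInf, ContinuousMap.neg_apply]
  linarith

private lemma gInf_pull_add (hc : Continuous f) (ho : IsOpenMap f) (hs : Function.Surjective f)
    (θ : C(Y, ℝ)) (φ : C(X, ℝ)) :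
    gInf hc ho hs (θ.comp ⟨f, hc⟩ + φ) = θ + gInf hc ho hs φ := by
  have h1 : -(θ.comp ⟨f, hc⟩ + φ) = (-θ).comp ⟨f, hc⟩ + (-φ) := by
    ext x; simp; ring
  rw [gInf, h1, gSup_pull_add hc ho hs (-θ) (-φ)]
  simp only [gInf, neg_add_rev, neg_neg]
  abel

private lemma gInf_comp (hc : Continuous f) (ho : IsOpenMap f) (hs : Function.Surjective f)
    (ψ : C(Y, ℝ)) : gInf hc ho hs (ψ.comp ⟨f, hc⟩) = ψ := by
  have h1 : -(ψ.comp ⟨f, hc⟩) = (-ψ).comp ⟨f, hc⟩ := by ext x; simp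
  rw [gInf, h1, gSup_comp hc ho hs (-ψ), neg_neg]

private lemma gInf_smul (hc : Continuous f) (ho : IsOpenMap f) (hs : Function.Surjective f)
    (φ : C(X, ℝ)) (t : ℝ) (ht : 0 ≤ t) :
    gInf hc ho hs (t • φ) = t • gInf hc ho hs φ := by
  have h1 : -(t • φ) = t • (-φ) := by ext x; simp
  rw [gInf, h1, gSup_smul hc ho hs (-φ) t ht, gInf]
  ext y; simp

private lemma gInf_mono (hc : Continuous f) (ho : IsOpenMap f) (hs : Function.Surjective f)
    {φ ψ : C(X, ℝ)} (h : φ ≤ ψ) : gInf hc ho hs φ ≤ gInf hc ho hs ψ := by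
  rw [ContinuousMap.le_def]
  intro y
  simp only [gInf, ContinuousMap.neg_apply]
  exact neg_le_neg (ContinuousMap.le_def.1 (gSup_mono hc ho hs (neg_le_neg h)) y)

private lemma dirac_mem {Z : Type*} [TopologicalSpace Z] (z : Z) :
    (fun φ : C(Z, ℝ) => φ z) ∈ OHF Z :=
  ⟨rfl, fun _ _ => rfl, fun _ _ h => h z, fun _ _ _ => rfl⟩

private lemma comp_gSup_mem (hc : Continuous f) (ho : IsOpenMap f) (hs : Function.Surjective f)
    (lam : ↥(OHF Y)) : (fun φ : C(X, ℝ) => lam.1 (gSup hc ho hs φ)) ∈ OHF X := by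
  refine ⟨?_, ?_, ?_, ?_⟩
  · have h1 : gSup hc ho hs (1 : C(X, ℝ)) = 1 := by
      have h0 : (1 : C(X, ℝ)) = (1 : C(Y, ℝ)).comp ⟨f, hc⟩ := rfl
      rw [h0, gSup_comp]
    show lam.1 (gSup hc ho hs 1) = 1
    rw [h1]; exact lam.2.1
  · intro φ c
    show lam.1 (gSup hc ho hs (φ + ContinuousMap.const X c)) = lam.1 (gSup hc ho hs φ) + c
    have h1 : φ + ContinuousMap.const X c = (ContinuousMap.const Y c).comp ⟨f, hc⟩ + φ := by
      ext x; simp [add_comm]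
    rw [h1, gSup_pull_add, add_comm]
    exact lam.2.2.1 _ c
  · intro φ ψ h
    exact lam.2.2.2.1 _ _ (gSup_mono hc ho hs h)
  · intro φ t ht
    show lam.1 (gSup hc ho hs (t • φ)) = t * lam.1 (gSup hc ho hs φ)
    rw [gSup_smul hc ho hs φ t ht]
    exact lam.2.2.2.2 _ t ht

private lemma comp_gInf_mem (hc : Continuous f) (ho : IsOpenMap f) (hs : Function.Surjective f)
    (lam : ↥(OHF Y)) : (fun φ : C(X, ℝ) => lam.1 (gInf hc ho hs φ)) ∈ OHF X := by
  refine ⟨?_, ?_, ?_, ?_⟩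
  · have h1 : gInf hc ho hs (1 : C(X, ℝ)) = 1 := by
      have h0 : (1 : C(X, ℝ)) = (1 : C(Y, ℝ)).comp ⟨f, hc⟩ := rfl
      rw [h0, gInf_comp]
    show lam.1 (gInf hc ho hs 1) = 1
    rw [h1]; exact lam.2.1
  · intro φ c
    show lam.1 (gInf hc ho hs (φ + ContinuousMap.const X c)) = lam.1 (gInf hc ho hs φ) + c
    have h1 : φ + ContinuousMap.const X c = (ContinuousMap.const Y c).comp ⟨f, hc⟩ + φ := by
      ext x; simp [add_comm]
    rw [h1, gInf_pull_add, add_comm]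
    exact lam.2.2.1 _ c
  · intro φ ψ h
    exact lam.2.2.2.1 _ _ (gInf_mono hc ho hs h)
  · intro φ t ht
    show lam.1 (gInf hc ho hs (t • φ)) = t * lam.1 (gInf hc ho hs φ)
    rw [gInf_smul hc ho hs φ t ht]
    exact lam.2.2.2.2 _ t ht

end OHAux

/-- Let `f : X → Y` be an open continuous surjection of compact Hausdorff spaces. Then
`OH(f) : OH(X) → OH(Y)` has a one-point (degenerate) fiber iff `f` has one. -/
theorem OHmap_degenerate_fiber_iff {X Y : Type*} [TopologicalSpace X] [CompactSpace X]
    [T2Space X] [TopologicalSpace Y] [CompactSpace Y] [T2Space Y]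
    (f : X → Y) (hc : Continuous f) (ho : IsOpenMap f) (hs : Function.Surjective f) :
    (∃ lam : ↥(OHF Y), ∃ ν : ↥(OHF X), OHmap f hc ⁻¹' {lam} = {ν}) ↔
      ∃ y : Y, ∃ x : X, f ⁻¹' {y} = {x} := by
  classical
  constructor
  · rintro ⟨lam, ν, hfib⟩
    by_contra hno
    push_neg at hno
    -- for each y choose a Urysohn function with oscillation ≥ 1 on the fiber
    have hphi : ∀ y : Y, ∃ φ : C(X, ℝ), (0 : C(X, ℝ)) ≤ φ ∧
        1 ≤ gSup hc ho hs φ y - gInf hc ho hs φ y := by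
      intro y
      obtain ⟨x₁, hx₁⟩ := hs y
      have hx₁m : x₁ ∈ f ⁻¹' {y} := hx₁
      have hne : f ⁻¹' {y} ≠ {x₁} := hno y x₁
      have hex : ∃ x₂ ∈ f ⁻¹' {y}, x₂ ≠ x₁ := by
        by_contra hcon
        push_neg at hcon
        exact hne (Set.eq_singleton_iff_unique_mem.2 ⟨hx₁m, hcon⟩)
      obtain ⟨x₂, hx₂m, hx₂ne⟩ := hex
      obtain ⟨φ, hφ1, hφ2, hφ01⟩ := exists_continuous_zero_one_of_isClosed
        (isClosed_singleton (x := x₁)) (isClosed_singleton (x := x₂))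
        (Set.disjoint_singleton.2 (Ne.symm hx₂ne))
      refine ⟨φ, ?_, ?_⟩
      · rw [ContinuousMap.le_def]
        intro x
        exact (hφ01 x).1
      · have h1 : gInf hc ho hs φ y ≤ 0 := by
          have := gInf_le hc ho hs φ x₁
          rwa [show f x₁ = y from hx₁, hφ1 rfl] at this
        have h2 : (1 : ℝ) ≤ gSup hc ho hs φ y := by
          have := le_gSup hc ho hs φ x₂
          rw [show f x₂ = y from hx₂m] at this
          have h2' : φ x₂ = 1 := hφ2 rfl
          linarith
        linarith
    choose Φ hΦ0 hΦy using hphi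
    set D : Y → C(Y, ℝ) := fun y => gSup hc ho hs (Φ y) - gInf hc ho hs (Φ y) with hD
    -- D y ≥ 0 pointwise
    have hD0 : ∀ y y' : Y, 0 ≤ (D y) y' := by
      intro y y'
      obtain ⟨x, hx⟩ := hs y'
      have h1 := gInf_le hc ho hs (Φ y) x
      have h2 := le_gSup hc ho hs (Φ y) x
      rw [hx] at h1 h2
      simp only [hD, ContinuousMap.sub_apply]
      linarith
    have hDy : ∀ y : Y, 1 ≤ (D y) y := by
      intro y
      simpa only [hD, ContinuousMap.sub_apply] using hΦy y
    -- the two functionals λ∘gSup and λ∘gInf are in the fiber, hence equal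
    have hsupmem := comp_gSup_mem hc ho hs lam
    have hinfmem := comp_gInf_mem hc ho hs lam
    have h1 : OHmap f hc ⟨_, hsupmem⟩ = lam := by
      apply Subtype.ext; funext ψ
      show lam.1 (gSup hc ho hs (ψ.comp ⟨f, hc⟩)) = lam.1 ψ
      rw [gSup_comp]
    have h2 : OHmap f hc ⟨_, hinfmem⟩ = lam := by
      apply Subtype.ext; funext ψ
      show lam.1 (gInf hc ho hs (ψ.comp ⟨f, hc⟩)) = lam.1 ψ
      rw [gInf_comp]
    have e1 : (⟨_, hsupmem⟩ : ↥(OHF X)) = ν := by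
      have hm : (⟨_, hsupmem⟩ : ↥(OHF X)) ∈ OHmap f hc ⁻¹' {lam} := by
        rw [Set.mem_preimage, Set.mem_singleton_iff]; exact h1
      rwa [hfib, Set.mem_singleton_iff] at hm
    have e2 : (⟨_, hinfmem⟩ : ↥(OHF X)) = ν := by
      have hm : (⟨_, hinfmem⟩ : ↥(OHF X)) ∈ OHmap f hc ⁻¹' {lam} := by
        rw [Set.mem_preimage, Set.mem_singleton_iff]; exact h2
      rwa [hfib, Set.mem_singleton_iff] at hm
    have key : ∀ φ : C(X, ℝ), lam.1 (gSup hc ho hs φ) = lam.1 (gInf hc ho hs φ) := by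
      intro φ
      have := congrArg Subtype.val (e1.trans e2.symm)
      exact congrFun this φ
    -- translation invariance under adding D y
    have hshift : ∀ (θ : C(Y, ℝ)) (y : Y), lam.1 (θ + D y) = lam.1 θ := by
      intro θ y
      have hk := key ((θ - gInf hc ho hs (Φ y)).comp ⟨f, hc⟩ + Φ y)
      rw [gSup_pull_add, gInf_pull_add] at hk
      have harr1 : θ - gInf hc ho hs (Φ y) + gSup hc ho hs (Φ y) = θ + D y := by
        rw [hD]; abel
      have harr2 : θ - gInf hc ho hs (Φ y) + gInf hc ho hs (Φ y) = θ := by abel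
      rwa [harr1, harr2] at hk
    have hzero : lam.1 0 = 0 := by
      have := lam.2.2.2.2 0 0 le_rfl
      simpa using this
    have hconst : ∀ c : ℝ, lam.1 (ContinuousMap.const Y c) = c := by
      intro c
      have := lam.2.2.1 0 c
      rw [hzero, zero_add] at this
      simpa using this
    have hsum : ∀ s : Finset Y, lam.1 (∑ y ∈ s, D y) = 0 := by
      intro s
      induction s using Finset.induction_on with
      | empty => simpa using hzero
      | @insert a s ha ih =>
        rw [Finset.sum_insert ha, add_comm, hshift, ih]
    -- finite subcover
    set U : Y → Set Y := fun y => {y' | 1/2 < (D y) y'} with hU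
    have hUopen : ∀ y, IsOpen (U y) := fun y =>
      isOpen_lt continuous_const (D y).continuous
    have hcover : (Set.univ : Set Y) ⊆ ⋃ y ∈ (Set.univ : Set Y), U y := by
      intro y' _
      refine Set.mem_biUnion (Set.mem_univ y') ?_
      show (1:ℝ)/2 < (D y') y'
      have := hDy y'
      linarith
    obtain ⟨t, ht⟩ := isCompact_univ.elim_finite_subcover_image (fun y _ => hUopen y) hcover
    obtain ⟨htsub, htfin, htcov⟩ := ht
    set tt := htfin.toFinset with htt
    have hF : ContinuousMap.const Y ((1:ℝ)/2) ≤ ∑ y ∈ tt, D y := by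
      rw [ContinuousMap.le_def]
      intro y'
      have hy' : y' ∈ ⋃ i ∈ t, U i := htcov (Set.mem_univ y')
      rw [Set.mem_iUnion₂] at hy'
      obtain ⟨k, hk, hyk⟩ := hy'
      have hk' : k ∈ tt := htfin.mem_toFinset.2 hk
      have hsle : (D k) y' ≤ (∑ y ∈ tt, D y) y' := by
        rw [ContinuousMap.sum_apply]
        exact Finset.single_le_sum (fun i _ => hD0 i y') hk'
      have h12 : (1:ℝ)/2 < (D k) y' := hyk
      simp only [ContinuousMap.const_apply]
      linarith
    have hle := lam.2.2.2.1 _ _ hF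
    rw [hconst, hsum] at hle
    linarith
  · rintro ⟨y₀, x₀, hfib⟩
    have hx₀ : f x₀ = y₀ := by
      have : x₀ ∈ f ⁻¹' {y₀} := by rw [hfib]; exact Set.mem_singleton x₀
      exact this
    refine ⟨⟨_, dirac_mem y₀⟩, ⟨_, dirac_mem x₀⟩, ?_⟩
    apply Set.Subset.antisymm
    · intro μ hμ
      rw [Set.mem_preimage, Set.mem_singleton_iff] at hμ
      rw [Set.mem_singleton_iff]
      apply Subtype.ext; funext φ
      show μ.1 φ = φ x₀
      have hval : ∀ ψ : C(Y, ℝ), μ.1 (ψ.comp ⟨f, hc⟩) = ψ y₀ := by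
        intro ψ
        exact congrFun (congrArg Subtype.val hμ) ψ
      have hsupy : gSup hc ho hs φ y₀ = φ x₀ := by
        show sSup (φ '' (f ⁻¹' {y₀})) = φ x₀
        rw [hfib, Set.image_singleton, csSup_singleton]
      have hinfy : gInf hc ho hs φ y₀ = φ x₀ := by
        have : gSup hc ho hs (-φ) y₀ = -(φ x₀) := by
          show sSup (((-φ : C(X, ℝ)) : X → ℝ) '' (f ⁻¹' {y₀})) = -(φ x₀)
          rw [hfib, Set.image_singleton, csSup_singleton]
          simp
        simp only [gInf, ContinuousMap.neg_apply, this, neg_neg]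
      have hup : μ.1 φ ≤ φ x₀ := by
        have hle : φ ≤ (gSup hc ho hs φ).comp ⟨f, hc⟩ := by
          rw [ContinuousMap.le_def]
          intro x
          exact le_gSup hc ho hs φ x
        have := μ.2.2.2.1 _ _ hle
        rwa [hval, hsupy] at this
      have hlo : φ x₀ ≤ μ.1 φ := by
        have hle : (gInf hc ho hs φ).comp ⟨f, hc⟩ ≤ φ := by
          rw [ContinuousMap.le_def]
          intro x
          exact gInf_le hc ho hs φ x
        have := μ.2.2.2.1 _ _ hle
        rwa [hval, hinfy] at this
      linarith
    · rw [Set.singleton_subset_iff, Set.mem_preimage, Set.mem_singleton_iff]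
      apply Subtype.ext; funext ψ
      show ψ (f x₀) = ψ y₀
      rw [hx₀]
end
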